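/- Two Λ-lattices X and Y are isomorphic if and only if (a) the End_Λ(Y)-module Hom_Λ(X, Y) (with End_Λ(Y) acting by post-composition) is free of rank 1, and (b) every free generator of Hom_Λ(X, Y) over End_Λ(Y) is an isomorphism X → Y. -/

import Mathlib

open Submodule Function

/-- A submodule is stable under (left multiplication by) a set `S` of operators. -/
def SetStable {A V R₀ : Type*} [Semiring R₀] [AddCommMonoid V] [Module R₀ V] [SMul A V]
    (S : Set A) (X : Submodule R₀ V) : Prop :=
  ∀ a ∈ S, ∀ x ∈ X, a • x ∈ X

/-- A linear map `f : X → Y` intertwines the action of every element of `S`. -/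
def IsEquivMap {A V W R₀ : Type*} [Semiring R₀] [AddCommMonoid V] [AddCommMonoid W]
    [Module R₀ V] [Module R₀ W] [SMul A V] [SMul A W]
    (S : Set A) (X : Submodule R₀ V) (Y : Submodule R₀ W) (f : X →ₗ[R₀] Y) : Prop :=
  ∀ a ∈ S, ∀ (v : V) (hv : v ∈ X) (hav : a • v ∈ X),
    ((f ⟨a • v, hav⟩ : Y) : W) = a • ((f ⟨v, hv⟩ : Y) : W)

/-- There exists an isomorphism of lattices, i.e. a bijective `R₀`-linear map
intertwining the action of every element of `S`. -/
def ExistsLatIso {A V W R₀ : Type*} [Semiring R₀] [AddCommMonoid V] [AddCommMonoid W]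
    [Module R₀ V] [Module R₀ W] [SMul A V] [SMul A W]
    (S : Set A) (X : Submodule R₀ V) (Y : Submodule R₀ W) : Prop :=
  ∃ f : X →ₗ[R₀] Y, Function.Bijective f ∧ IsEquivMap S X Y f

/-- `Λ` is an `𝒪`-order in the `K`-algebra `A`: it is a subring that is finitely
generated as an `𝒪`-module and spans `A` over `K`. -/
def IsOrder (𝒪 K A : Type*) [CommRing 𝒪] [Field K] [Ring A] [Algebra 𝒪 K] [Algebra K A]
    [Algebra 𝒪 A] (Λ : Subalgebra 𝒪 A) : Prop :=
  (Subalgebra.toSubmodule Λ).FG ∧ Submodule.span K (Λ : Set A) = ⊤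

/-- The localization `𝒪_𝔭` of `𝒪` at a prime `𝔭`, realized as a subalgebra of the
fraction field `K`. -/
noncomputable def localizationAt (𝒪 K : Type*) [CommRing 𝒪] [IsDomain 𝒪] [Field K]
    [Algebra 𝒪 K] [IsFractionRing 𝒪 K] (𝔭 : Ideal 𝒪) (h𝔭 : 𝔭.IsPrime) : Subalgebra 𝒪 K :=
  letI := h𝔭
  Localization.subalgebra K 𝔭.primeCompl
    (fun s hs => mem_nonZeroDivisors_of_ne_zero (fun h => hs (by simp [h])))

/-- The localization `X_𝔭 = 𝒪_𝔭 X` of a lattice `X`, as an `𝒪_𝔭`-submodule. -/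
noncomputable def locLattice (𝒪 K : Type*) [CommRing 𝒪] [IsDomain 𝒪] [Field K]
    [Algebra 𝒪 K] [IsFractionRing 𝒪 K] {V : Type*} [AddCommGroup V] [Module K V] [Module 𝒪 V]
    (𝔭 : Ideal 𝒪) (h𝔭 : 𝔭.IsPrime) (X : Submodule 𝒪 V) :
    Submodule (localizationAt 𝒪 K 𝔭 h𝔭) V :=
  Submodule.span (localizationAt 𝒪 K 𝔭 h𝔭) (X : Set V)

/-- Two `Λ`-lattices are locally isomorphic (lie in the same genus) if their
localizations at every maximal ideal `𝔭` of `𝒪` are isomorphic `Λ_𝔭`-lattices. -/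
noncomputable def LocallyIsomorphic (𝒪 K A : Type*) [CommRing 𝒪] [IsDomain 𝒪] [Field K]
    [Algebra 𝒪 K] [IsFractionRing 𝒪 K] [Ring A] [Algebra 𝒪 A]
    {V W : Type*} [AddCommGroup V] [Module K V] [Module 𝒪 V] [Module A V]
    [AddCommGroup W] [Module K W] [Module 𝒪 W] [Module A W]
    (Λ : Subalgebra 𝒪 A) (X : Submodule 𝒪 V) (Y : Submodule 𝒪 W) : Prop :=
  ∀ (𝔭 : Ideal 𝒪) (h𝔭 : 𝔭.IsMaximal),
    ExistsLatIso (Λ : Set A) (locLattice 𝒪 K 𝔭 h𝔭.isPrime X) (locLattice 𝒪 K 𝔭 h𝔭.isPrime Y)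

/-- `φ` is a free generator of `Hom_S(X, Y)` as a module over `End_S(Y)`, acting by
post-composition. -/
def IsFreeGenerator {A V W R₀ : Type*} [Semiring R₀] [AddCommMonoid V] [AddCommMonoid W]
    [Module R₀ V] [Module R₀ W] [SMul A V] [SMul A W]
    (S : Set A) (X : Submodule R₀ V) (Y : Submodule R₀ W) (φ : X →ₗ[R₀] Y) : Prop :=
  ∀ ψ : X →ₗ[R₀] Y, IsEquivMap S X Y ψ → ∃! h : Y →ₗ[R₀] Y, IsEquivMap S Y Y h ∧ ψ = h ∘ₗ φ

namespace IsEquivMap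

variable {A V W U R₀ : Type*} [Semiring R₀] [AddCommMonoid V] [AddCommMonoid W]
  [AddCommMonoid U] [Module R₀ V] [Module R₀ W] [Module R₀ U] [SMul A V] [SMul A W] [SMul A U]
  {S : Set A} {X : Submodule R₀ V} {Y : Submodule R₀ W} {Z : Submodule R₀ U}

theorem id : IsEquivMap S X X LinearMap.id := fun _ _ _ _ _ => rfl

theorem comp {h : Y →ₗ[R₀] Z} {φ : X →ₗ[R₀] Y} (hh : IsEquivMap S Y Z h)
    (hφ : IsEquivMap S X Y φ) : IsEquivMap S X Z (h ∘ₗ φ) := by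
  intro a ha v hv hav
  have hφv := hφ a ha v hv hav
  have hmem : a • (φ ⟨v, hv⟩ : W) ∈ Y := hφv ▸ (φ ⟨a • v, hav⟩).2
  have : φ ⟨a • v, hav⟩ = ⟨a • (φ ⟨v, hv⟩ : W), hmem⟩ := Subtype.ext hφv
  simpa only [LinearMap.comp_apply, this] using hh a ha _ (φ ⟨v, hv⟩).2 hmem

theorem symm (hX : SetStable S X) {e : X ≃ₗ[R₀] Y} (he : IsEquivMap S X Y e) :
    IsEquivMap S Y X e.symm := by
  intro a ha w hw haw
  set v := e.symm ⟨w, hw⟩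
  have hav : a • (v : V) ∈ X := hX a ha v v.2
  have : e.symm ⟨a • w, haw⟩ = ⟨a • (v : V), hav⟩ := by
    rw [LinearEquiv.symm_apply_eq]
    ext
    have hev := he a ha v v.2 hav
    simp only [LinearEquiv.coe_coe, Subtype.coe_eta, v, LinearEquiv.apply_symm_apply] at hev
    exact hev.symm
  simp only [LinearEquiv.coe_coe, this]
  rfl

end IsEquivMap

section FreeGenerator

variable {A V W R₀ : Type*} [Semiring R₀] [AddCommMonoid V] [AddCommMonoid W]
  [Module R₀ V] [Module R₀ W] [SMul A V] [SMul A W]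
  {S : Set A} {X : Submodule R₀ V} {Y : Submodule R₀ W}

theorem isFreeGenerator_of_linearEquiv (hX : SetStable S X) {e : X ≃ₗ[R₀] Y}
    (he : IsEquivMap S X Y e) : IsFreeGenerator S X Y e := by
  intro ψ hψ
  refine ⟨ψ ∘ₗ e.symm, ⟨hψ.comp (he.symm hX), by ext; simp⟩, ?_⟩
  rintro h ⟨-, rfl⟩
  ext
  simp

/-- If `φ` is a free generator and `e` an isomorphism, write `e = h ∘ φ` and `φ = g ∘ e`:
uniqueness of the coefficient of `φ = (g ∘ h) ∘ φ` gives `g ∘ h = 1`, and surjectivity of `e`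
gives `h ∘ g = 1`, so `φ = g ∘ e` is an isomorphism. -/
theorem IsFreeGenerator.bijective_of_linearEquiv (hX : SetStable S X) {e : X ≃ₗ[R₀] Y}
    (he : IsEquivMap S X Y e) {φ : X →ₗ[R₀] Y} (hφ : IsEquivMap S X Y φ)
    (hgen : IsFreeGenerator S X Y φ) : Bijective φ := by
  obtain ⟨h, ⟨hh, he_eq⟩, -⟩ := hgen e he
  set g : Y →ₗ[R₀] Y := φ ∘ₗ e.symm
  have hφ_eq : φ = g ∘ₗ e := by ext; simp [g]
  have hgh : g ∘ₗ h = LinearMap.id := by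
    obtain ⟨_, -, huniq⟩ := hgen φ hφ
    rw [huniq _ ⟨(hφ.comp (he.symm hX)).comp hh, by rw [LinearMap.comp_assoc, ← he_eq, ← hφ_eq]⟩,
      huniq _ ⟨IsEquivMap.id, rfl⟩]
  have hhg : h ∘ₗ g = LinearMap.id := by
    rw [← LinearMap.cancel_right e.surjective, LinearMap.comp_assoc, ← hφ_eq, ← he_eq]
    rfl
  rw [hφ_eq, LinearMap.coe_comp]
  exact (bijective_iff_has_inverse.mpr ⟨h, LinearMap.congr_fun hhg, LinearMap.congr_fun hgh⟩).comp
    e.bijective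

end FreeGenerator

theorem stmt_7_general
    (𝒪 : Type*) [CommRing 𝒪]
    (A : Type*) [Ring A] [Algebra 𝒪 A]
    (Λ : Subalgebra 𝒪 A)
    (V : Type*) [AddCommGroup V] [Module 𝒪 V]
    [Module A V]
    (W : Type*) [AddCommGroup W] [Module 𝒪 W]
    [Module A W]
    (X : Submodule 𝒪 V) (hXst : SetStable (Λ : Set A) X)
    (Y : Submodule 𝒪 W) :
    ExistsLatIso (Λ : Set A) X Y ↔
      -- (a) `Hom_Λ(X,Y)` is free of rank one over `End_Λ(Y)`:
      ((∃ φ : X →ₗ[𝒪] Y, IsEquivMap (Λ : Set A) X Y φ ∧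
          (∀ ψ : X →ₗ[𝒪] Y, IsEquivMap (Λ : Set A) X Y ψ →
            ∃! h : Y →ₗ[𝒪] Y, IsEquivMap (Λ : Set A) Y Y h ∧ ψ = h ∘ₗ φ)) ∧
      -- (b) every free generator of `Hom_Λ(X,Y)` over `End_Λ(Y)` is an isomorphism:
        (∀ φ : X →ₗ[𝒪] Y, IsEquivMap (Λ : Set A) X Y φ →
          (∀ ψ : X →ₗ[𝒪] Y, IsEquivMap (Λ : Set A) X Y ψ →
            ∃! h : Y →ₗ[𝒪] Y, IsEquivMap (Λ : Set A) Y Y h ∧ ψ = h ∘ₗ φ) →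
          Function.Bijective φ)) := by
  change _ ↔ (∃ φ, IsEquivMap _ X Y φ ∧ IsFreeGenerator _ X Y φ) ∧
    ∀ φ, IsEquivMap _ X Y φ → IsFreeGenerator _ X Y φ → Bijective φ
  constructor
  · rintro ⟨f, hf, hfe⟩
    set e := LinearEquiv.ofBijective f hf
    exact ⟨⟨e, hfe, isFreeGenerator_of_linearEquiv hXst hfe⟩,
      fun φ hφ hgen => hgen.bijective_of_linearEquiv hXst (e := e) hfe hφ⟩
  · rintro ⟨⟨φ, hφ, hgen⟩, hbij⟩
    exact ⟨φ, hbij φ hφ hgen, hφ⟩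

/-- Two `Λ`-lattices `X` and `Y` are isomorphic if and only if
(a) `Hom_Λ(X, Y)` is free of rank `1` over `End_Λ(Y)` (acting by post-composition), and
(b) every free generator of `Hom_Λ(X, Y)` over `End_Λ(Y)` is an isomorphism `X → Y`. -/
theorem stmt_7
    (𝒪 : Type*) [CommRing 𝒪] [IsDomain 𝒪] [IsDedekindDomain 𝒪]
    (K : Type*) [Field K] [Algebra 𝒪 K] [IsFractionRing 𝒪 K]
    (hOK : ¬ Function.Surjective (algebraMap 𝒪 K))
    (A : Type*) [Ring A] [Algebra K A] [Algebra 𝒪 A] [IsScalarTower 𝒪 K A]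
    [FiniteDimensional K A] [IsSemisimpleRing A] [Algebra.IsSeparable K A]
    (Λ : Subalgebra 𝒪 A) (hΛ : IsOrder 𝒪 K A Λ)
    (V : Type*) [AddCommGroup V] [Module K V] [Module 𝒪 V] [IsScalarTower 𝒪 K V]
    [Module A V] [IsScalarTower K A V]
    (W : Type*) [AddCommGroup W] [Module K W] [Module 𝒪 W] [IsScalarTower 𝒪 K W]
    [Module A W] [IsScalarTower K A W]
    (X : Submodule 𝒪 V) (hXfg : X.FG) (hXst : SetStable (Λ : Set A) X)
    (Y : Submodule 𝒪 W) (hYfg : Y.FG) (hYst : SetStable (Λ : Set A) Y) :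
    ExistsLatIso (Λ : Set A) X Y ↔
      -- (a) `Hom_Λ(X,Y)` is free of rank one over `End_Λ(Y)`:
      ((∃ φ : X →ₗ[𝒪] Y, IsEquivMap (Λ : Set A) X Y φ ∧
          (∀ ψ : X →ₗ[𝒪] Y, IsEquivMap (Λ : Set A) X Y ψ →
            ∃! h : Y →ₗ[𝒪] Y, IsEquivMap (Λ : Set A) Y Y h ∧ ψ = h ∘ₗ φ)) ∧
      -- (b) every free generator of `Hom_Λ(X,Y)` over `End_Λ(Y)` is an isomorphism:
        (∀ φ : X →ₗ[𝒪] Y, IsEquivMap (Λ : Set A) X Y φ →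
          (∀ ψ : X →ₗ[𝒪] Y, IsEquivMap (Λ : Set A) X Y ψ →
            ∃! h : Y →ₗ[𝒪] Y, IsEquivMap (Λ : Set A) Y Y h ∧ ψ = h ∘ₗ φ) →
          Function.Bijective φ)) :=
  stmt_7_general 𝒪 A Λ V W X hXst Y
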